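/- Let Q(x) = ∫_x^∞ (1/√(2π)) e^{−t²/2} dt denote the Gaussian Q-function, let n > 0 be a real number (the blocklength) and r ≥ 0 a real number (the target rate). Then the decoding error probability function ε(γ) = Q( √n · (ln(1+γ) − r·ln 2) / √(1 − (1+γ)^{−2}) ) is strictly decreasing on the interval (0, ∞). -/

import Mathlib

/-!
Substituting `x = 1 + γ`, the argument of `Q` is `√n · x (log x - c) / √(x² - 1)` with
`c = r log 2 ≥ 0`. Its derivative in `x` has the sign of `x² - 1 - log x + c`, which is positive
on `(1, ∞)` because `log x < x - 1 < x² - 1`. The Gaussian tail `Q` is strictly decreasing since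
its integrand is positive and integrable.
-/
open Real MeasureTheory Set ProbabilityTheory

theorem strictAnti_setIntegral_Ioi {f : ℝ → ℝ} (hf : Integrable f) (hpos : ∀ t, 0 < f t) :
    StrictAnti fun x => ∫ t in Ioi x, f t := by
  intro x y hxy
  have hsplit : ∫ t in Ioi x, f t = (∫ t in x..y, f t) + ∫ t in Ioi y, f t := by
    rw [intervalIntegral.integral_of_le hxy.le, ← setIntegral_union (Ioc_disjoint_Ioi le_rfl)
      measurableSet_Ioi hf.integrableOn hf.integrableOn, Ioc_union_Ioi_eq_Ioi hxy.le]
  have hmid : 0 < ∫ t in x..y, f t :=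
    intervalIntegral.intervalIntegral_pos_of_pos_on hf.intervalIntegrable (fun t _ => hpos t) hxy
  dsimp only
  linarith

theorem gaussianPDFReal_zero_one (t : ℝ) :
    gaussianPDFReal 0 1 t = (√(2 * π))⁻¹ * exp (-t ^ 2 / 2) := by
  simp [gaussianPDFReal]

theorem strictAnti_gaussian_tail :
    StrictAnti fun x => ∫ t in Ioi x, (√(2 * π))⁻¹ * exp (-t ^ 2 / 2) := by
  simp_rw [← gaussianPDFReal_zero_one]
  exact strictAnti_setIntegral_Ioi (integrable_gaussianPDFReal 0 1)
    fun t => gaussianPDFReal_pos 0 1 t one_ne_zero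

theorem hasDerivAt_mul_log_sub_div_sqrt (c : ℝ) {x : ℝ} (hx : 1 < x) :
    HasDerivAt (fun x => x * (log x - c) / √(x ^ 2 - 1))
      ((x ^ 2 - 1 - (log x - c)) / ((x ^ 2 - 1) * √(x ^ 2 - 1))) x := by
  have hx0 : 0 < x := one_pos.trans hx
  have hq : 0 < x ^ 2 - 1 := by nlinarith
  have hs : 0 < √(x ^ 2 - 1) := sqrt_pos.2 hq
  have hnum : HasDerivAt (fun x => x * (log x - c)) (1 * (log x - c) + x * x⁻¹) x :=
    (hasDerivAt_id x).mul ((hasDerivAt_log hx0.ne').sub_const c)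
  have hden : HasDerivAt (fun x => √(x ^ 2 - 1)) (2 * x / (2 * √(x ^ 2 - 1))) x := by
    simpa using ((hasDerivAt_pow 2 x).sub_const 1).sqrt hq.ne'
  refine (hnum.div hden hs.ne').congr_deriv ?_
  have hss : √(x ^ 2 - 1) ^ 2 = x ^ 2 - 1 := sq_sqrt hq.le
  field_simp
  rw [hss]
  ring

theorem strictMonoOn_mul_log_sub_div_sqrt {c : ℝ} (hc : 0 ≤ c) :
    StrictMonoOn (fun x => x * (log x - c) / √(x ^ 2 - 1)) (Ioi 1) := by
  refine strictMonoOn_of_hasDerivWithinAt_pos (convex_Ioi 1)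
    (fun x hx => (hasDerivAt_mul_log_sub_div_sqrt c hx).continuousAt.continuousWithinAt)
    (fun x hx => (hasDerivAt_mul_log_sub_div_sqrt c (interior_subset hx)).hasDerivWithinAt) ?_
  rw [interior_Ioi]
  intro x hx
  have hx : 1 < x := hx
  have hq : 0 < x ^ 2 - 1 := by nlinarith
  have hlog : log x < x - 1 := log_lt_sub_one_of_pos (one_pos.trans hx) hx.ne'
  have : 0 < x ^ 2 - 1 - (log x - c) := by nlinarith
  positivity

theorem sqrt_one_sub_inv_sq {x : ℝ} (hx : 0 < x) : √(1 - x⁻¹ ^ 2) = √(x ^ 2 - 1) / x := by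
  rw [show 1 - x⁻¹ ^ 2 = (x ^ 2 - 1) / x ^ 2 by field_simp, sqrt_div' _ (sq_nonneg x),
    sqrt_sq hx.le]

/-- Theorem 5 of the paper: with `Q` the Gaussian Q-function, blocklength `n > 0` and
target rate `r ≥ 0`, the finite-blocklength decoding error probability
`ε(γ) = Q(√n (ln(1+γ) - r ln 2)/√(1 - (1+γ)⁻²))` is strictly decreasing on `(0, ∞)`. -/
theorem stmt_6 (Q : ℝ → ℝ)
    (hQ : ∀ x, Q x = ∫ t in Set.Ioi x, (Real.sqrt (2 * Real.pi))⁻¹ * Real.exp (-t ^ 2 / 2))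
    (n r : ℝ) (hn : 0 < n) (hr : 0 ≤ r) :
    StrictAntiOn (fun γ : ℝ =>
        Q (Real.sqrt n * (Real.log (1 + γ) - r * Real.log 2) /
            Real.sqrt (1 - (1 + γ)⁻¹ ^ 2)))
      (Set.Ioi 0) := by
  obtain rfl : Q = fun x => ∫ t in Ioi x, (√(2 * π))⁻¹ * exp (-t ^ 2 / 2) := funext hQ
  have hc : 0 ≤ r * log 2 := mul_nonneg hr (log_nonneg one_le_two)
  have hinner : StrictMonoOn
      (fun γ => √n * ((1 + γ) * (log (1 + γ) - r * log 2) / √((1 + γ) ^ 2 - 1))) (Ioi 0) :=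
    fun a ha b hb hab => mul_lt_mul_of_pos_left
      (strictMonoOn_mul_log_sub_div_sqrt hc (by simp_all) (by simp_all) (by linarith))
      (sqrt_pos.2 hn)
  refine (strictAnti_gaussian_tail.comp_strictMonoOn hinner).congr fun γ (hγ : 0 < γ) => ?_
  simp only [Function.comp, sqrt_one_sub_inv_sq (by linarith : 0 < 1 + γ), div_div_eq_mul_div]
  ring_nf
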